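/- arXiv:2407.18819 — 6 statements merged into one kernel-verified Lean document; each statement's English description precedes it below -/
import Mathlib

section
/- Let N be a nonlinear connection and 𝓗 a smooth autoparallel function whose Hamilton metric g_H^{μν} := (1/2) ∂̄^μ ∂̄^ν 𝓗 is horizontally metrical. Then ∂̄^σ H^ρ_{μν} · ∂̄^ν 𝓗 = 0 (sum over ν) for all indices μ, ρ, σ, where H^ρ_{μν} := ∂̄^ρ N_{μν}. -/
open scoped BigOperators

/-- Phase space: `ℝⁿ × ℝⁿ` with coordinates `(x, k)`. -/
abbrev Phase (n : ℕ) := (Fin n → ℝ) × (Fin n → ℝ)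

/-- Spacetime partial derivative `∂_μ f`. -/
noncomputable def pdx {n : ℕ} (μ : Fin n) (f : Phase n → ℝ) (p : Phase n) : ℝ :=
  fderiv ℝ f p (Pi.single μ 1, 0)

/-- Momentum partial derivative `∂̄^μ f`. -/
noncomputable def pdk {n : ℕ} (μ : Fin n) (f : Phase n → ℝ) (p : Phase n) : ℝ :=
  fderiv ℝ f p (0, Pi.single μ 1)

/-- Horizontal derivative `δ_μ f = ∂_μ f + N_{νμ} ∂̄^ν f` associated to a
nonlinear connection `N`. -/
noncomputable def hderiv {n : ℕ} (N : Fin n → Fin n → Phase n → ℝ) (μ : Fin n)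
    (f : Phase n → ℝ) (p : Phase n) : ℝ :=
  pdx μ f p + ∑ ν, N ν μ p * pdk ν f p

/-- Hamilton metric `g_H^{μν} = (1/2) ∂̄^μ ∂̄^ν 𝓗`. -/
noncomputable def gHam {n : ℕ} (𝓗 : Phase n → ℝ) (μ ν : Fin n) (p : Phase n) : ℝ :=
  (1 / 2 : ℝ) * pdk μ (pdk ν 𝓗) p

noncomputable def dd {n : ℕ} (v : Phase n) (f : Phase n → ℝ) (p : Phase n) : ℝ :=
  fderiv ℝ f p v

def ex {n : ℕ} (μ : Fin n) : Phase n := (Pi.single μ 1, 0)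
def ek {n : ℕ} (ν : Fin n) : Phase n := (0, Pi.single ν 1)

variable {n : ℕ}

lemma pdk_eq (ν : Fin n) (f : Phase n → ℝ) : pdk ν f = dd (ek ν) f := rfl
lemma hderiv_eq (N : Fin n → Fin n → Phase n → ℝ) (μ : Fin n) (f : Phase n → ℝ) :
    hderiv N μ f = fun q => dd (ex μ) f q + ∑ ν, N ν μ q * dd (ek ν) f q := rfl
lemma gHam_eq (𝓗 : Phase n → ℝ) (a b : Fin n) :
    gHam 𝓗 a b = fun q => (1/2 : ℝ) * dd (ek a) (dd (ek b) 𝓗) q := rfl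

lemma dd_contDiff {f : Phase n → ℝ} (hf : ContDiff ℝ (⊤ : ℕ∞) f) (v : Phase n) :
    ContDiff ℝ (⊤ : ℕ∞) (dd v f) := by
  have h1 : ContDiff ℝ (⊤ : ℕ∞) (fderiv ℝ f) := hf.fderiv_right (by exact (by simp))
  exact (ContinuousLinearMap.apply ℝ ℝ v).contDiff.comp h1

lemma dd_comm {f : Phase n → ℝ} (hf : ContDiff ℝ (⊤ : ℕ∞) f) (v w : Phase n) :
    dd v (dd w f) = dd w (dd v f) := by
  funext p
  have hd : ContDiff ℝ (⊤ : ℕ∞) (fderiv ℝ f) := hf.fderiv_right (by exact (by simp))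
  have hda : DifferentiableAt ℝ (fderiv ℝ f) p := hd.differentiable (by simp) p
  have key : ∀ u : Phase n, fderiv ℝ (fun q => fderiv ℝ f q u) p
      = (fderiv ℝ (fderiv ℝ f) p).flip u := by
    intro u
    have := fderiv_clm_apply (c := fderiv ℝ f) (u := fun _ => u) hda
      (differentiableAt_const u)
    simpa [fderiv_fun_const] using this
  have hsymm : IsSymmSndFDerivAt ℝ f p :=
    hf.contDiffAt.isSymmSndFDerivAt (by rw [minSmoothness_of_isRCLikeNormedField]; exact WithTop.coe_le_coe.mpr (le_top : (2 : ℕ∞) ≤ ⊤))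
  show fderiv ℝ (fun q => fderiv ℝ f q w) p v = fderiv ℝ (fun q => fderiv ℝ f q v) p w
  rw [key w, key v]
  simpa using hsymm v w

lemma dd_comm3 {f : Phase n → ℝ} (hf : ContDiff ℝ (⊤ : ℕ∞) f) (u v w : Phase n) :
    dd u (dd v (dd w f)) = dd w (dd v (dd u f)) := by
  rw [dd_comm (dd_contDiff hf w) u v, dd_comm hf u w, dd_comm (dd_contDiff hf u) v w]

lemma dd_add_pt {f g : Phase n → ℝ} {p : Phase n} (v : Phase n)
    (hf : DifferentiableAt ℝ f p) (hg : DifferentiableAt ℝ g p) :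
    dd v (fun q => f q + g q) p = dd v f p + dd v g p := by
  simp [dd, fderiv_fun_add hf hg]

lemma dd_mul_pt {f g : Phase n → ℝ} {p : Phase n} (v : Phase n)
    (hf : DifferentiableAt ℝ f p) (hg : DifferentiableAt ℝ g p) :
    dd v (fun q => f q * g q) p = dd v f p * g p + f p * dd v g p := by
  simp [dd, fderiv_fun_mul hf hg]; ring

lemma dd_sum_pt {f : Fin n → Phase n → ℝ} {p : Phase n} (v : Phase n)
    (hf : ∀ ν, DifferentiableAt ℝ (f ν) p) :
    dd v (fun q => ∑ ν, f ν q) p = ∑ ν, dd v (f ν) p := by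
  simp [dd, fderiv_fun_sum (fun ν _ => hf ν)]

lemma dd_const_mul_pt {f : Phase n → ℝ} {p : Phase n} (v : Phase n) (c : ℝ)
    (hf : DifferentiableAt ℝ f p) :
    dd v (fun q => c * f q) p = c * dd v f p := by
  simp [dd, fderiv_const_mul hf c]

lemma dd_zero_fun (v : Phase n) : dd v (fun _ => (0:ℝ)) = fun _ => (0:ℝ) := by
  funext p; simp [dd]

lemma dd_expand2 {A : Phase n → ℝ} {F1 g1 F2 g2 : Fin n → Phase n → ℝ}
    (hA : ContDiff ℝ (⊤ : ℕ∞) A) (hF1 : ∀ ν, ContDiff ℝ (⊤ : ℕ∞) (F1 ν)) (hg1 : ∀ ν, ContDiff ℝ (⊤ : ℕ∞) (g1 ν))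
    (hF2 : ∀ ν, ContDiff ℝ (⊤ : ℕ∞) (F2 ν)) (hg2 : ∀ ν, ContDiff ℝ (⊤ : ℕ∞) (g2 ν)) (v : Phase n) :
    dd v (fun q => A q + ∑ ν, (F1 ν q * g1 ν q + F2 ν q * g2 ν q)) =
    fun p => dd v A p + ∑ ν, ((dd v (F1 ν) p * g1 ν p + F1 ν p * dd v (g1 ν) p)
      + (dd v (F2 ν) p * g2 ν p + F2 ν p * dd v (g2 ν) p)) := by
  funext p
  have hterm : ∀ ν, DifferentiableAt ℝ (fun q => F1 ν q * g1 ν q + F2 ν q * g2 ν q) p :=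
    fun ν => ((((hF1 ν).mul (hg1 ν)).add ((hF2 ν).mul (hg2 ν))).differentiable (by simp) p)
  have hS : DifferentiableAt ℝ (fun q => ∑ ν, (F1 ν q * g1 ν q + F2 ν q * g2 ν q)) p :=
    ((ContDiff.sum (fun ν _ => ((hF1 ν).mul (hg1 ν)).add ((hF2 ν).mul (hg2 ν)))).differentiable
      (by simp) p)
  rw [dd_add_pt v (hA.differentiable (by simp) p) hS, dd_sum_pt v hterm]
  congr 1
  refine Finset.sum_congr rfl fun ν _ => ?_
  rw [dd_add_pt v (((hF1 ν).mul (hg1 ν)).differentiable (by simp) p)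
      (((hF2 ν).mul (hg2 ν)).differentiable (by simp) p),
    dd_mul_pt v ((hF1 ν).differentiable (by simp) p) ((hg1 ν).differentiable (by simp) p),
    dd_mul_pt v ((hF2 ν).differentiable (by simp) p) ((hg2 ν).differentiable (by simp) p)]

lemma dd_expand1 {A : Phase n → ℝ} {F g : Fin n → Phase n → ℝ}
    (hA : ContDiff ℝ (⊤ : ℕ∞) A) (hF : ∀ ν, ContDiff ℝ (⊤ : ℕ∞) (F ν)) (hg : ∀ ν, ContDiff ℝ (⊤ : ℕ∞) (g ν))
    (v : Phase n) :
    dd v (fun q => A q + ∑ ν, F ν q * g ν q) =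
    fun p => dd v A p + ∑ ν, (dd v (F ν) p * g ν p + F ν p * dd v (g ν) p) := by
  funext p
  have hterm : ∀ ν, DifferentiableAt ℝ (fun q => F ν q * g ν q) p :=
    fun ν => (((hF ν).mul (hg ν)).differentiable (by simp) p)
  have hS : DifferentiableAt ℝ (fun q => ∑ ν, F ν q * g ν q) p :=
    ((ContDiff.sum (fun ν _ => (hF ν).mul (hg ν))).differentiable (by simp) p)
  rw [dd_add_pt v (hA.differentiable (by simp) p) hS, dd_sum_pt v hterm]
  congr 1
  exact Finset.sum_congr rfl fun ν _ =>
    dd_mul_pt v ((hF ν).differentiable (by simp) p) ((hg ν).differentiable (by simp) p)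


/-- If `𝓗` is autoparallel and its Hamilton metric is horizontally metrical, then
`∂̄^σ H^ρ_{μν} ∂̄^ν 𝓗 = 0`, where `H^ρ_{μν} = ∂̄^ρ N_{μν}`. -/
theorem pdk_Hcoef_contract_pdk_eq_zero {n : ℕ} (hn : 0 < n)
    (N : Fin n → Fin n → Phase n → ℝ)
    (hNsmooth : ∀ μ ν, ContDiff ℝ (⊤ : ℕ∞) (N μ ν))
    (hNsym : ∀ μ ν, N μ ν = N ν μ)
    (𝓗 : Phase n → ℝ) (h𝓗 : ContDiff ℝ (⊤ : ℕ∞) 𝓗)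
    (hauto : ∀ μ p, hderiv N μ 𝓗 p = 0)
    (hmetrical : ∀ μ ρ σ p, hderiv N μ (gHam 𝓗 ρ σ) p
        + ∑ lam, gHam 𝓗 lam σ p * pdk ρ (N lam μ) p
        + ∑ lam, gHam 𝓗 ρ lam p * pdk σ (N lam μ) p = 0) :
    ∀ μ ρ σ p, ∑ ν, pdk σ (pdk ρ (N μ ν)) p * pdk ν 𝓗 p = 0 := by
  intro μ ρ σ p
  -- shorthand
  set h : Phase n → ℝ := dd (ek ρ) (dd (ek σ) 𝓗) with hh
  have hhs : ContDiff ℝ (⊤ : ℕ∞) h := dd_contDiff (dd_contDiff h𝓗 (ek σ)) (ek ρ)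
  -- E1: second k-derivative of autoparallel equation
  have hzero : (fun q => dd (ex μ) 𝓗 q + ∑ ν, N ν μ q * dd (ek ν) 𝓗 q)
      = (fun _ => (0:ℝ)) := funext fun q => hauto μ q
  have ex1 := dd_expand1 (A := dd (ex μ) 𝓗) (F := fun ν => N ν μ)
    (g := fun ν => dd (ek ν) 𝓗) (dd_contDiff h𝓗 (ex μ)) (fun ν => hNsmooth ν μ)
    (fun ν => dd_contDiff h𝓗 (ek ν)) (ek ρ)
  have E1' : (fun q => dd (ek ρ) (dd (ex μ) 𝓗) q
      + ∑ ν, (dd (ek ρ) (N ν μ) q * dd (ek ν) 𝓗 q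
        + N ν μ q * dd (ek ρ) (dd (ek ν) 𝓗) q)) = fun _ => (0:ℝ) := by
    rw [← ex1, hzero, dd_zero_fun]
  have ex2 := dd_expand2 (A := dd (ek ρ) (dd (ex μ) 𝓗))
    (F1 := fun ν => dd (ek ρ) (N ν μ)) (g1 := fun ν => dd (ek ν) 𝓗)
    (F2 := fun ν => N ν μ) (g2 := fun ν => dd (ek ρ) (dd (ek ν) 𝓗))
    (dd_contDiff (dd_contDiff h𝓗 (ex μ)) (ek ρ))
    (fun ν => dd_contDiff (hNsmooth ν μ) (ek ρ)) (fun ν => dd_contDiff h𝓗 (ek ν))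
    (fun ν => hNsmooth ν μ) (fun ν => dd_contDiff (dd_contDiff h𝓗 (ek ν)) (ek ρ)) (ek σ)
  have E1'' : (fun q => dd (ek σ) (dd (ek ρ) (dd (ex μ) 𝓗)) q
      + ∑ ν, ((dd (ek σ) (dd (ek ρ) (N ν μ)) q * dd (ek ν) 𝓗 q
          + dd (ek ρ) (N ν μ) q * dd (ek σ) (dd (ek ν) 𝓗) q)
        + (dd (ek σ) (N ν μ) q * dd (ek ρ) (dd (ek ν) 𝓗) q
          + N ν μ q * dd (ek σ) (dd (ek ρ) (dd (ek ν) 𝓗)) q))) = fun _ => (0:ℝ) := by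
    rw [← ex2, E1', dd_zero_fun]
  have E1p := congrFun E1'' p
  -- commute derivatives into canonical form
  have comm1 : dd (ek σ) (dd (ek ρ) (dd (ex μ) 𝓗)) = dd (ex μ) h :=
    dd_comm3 h𝓗 (ek σ) (ek ρ) (ex μ)
  have comm2 : ∀ ν : Fin n, dd (ek σ) (dd (ek ν) 𝓗) = dd (ek ν) (dd (ek σ) 𝓗) :=
    fun ν => dd_comm h𝓗 (ek σ) (ek ν)
  have comm3 : ∀ ν : Fin n, dd (ek σ) (dd (ek ρ) (dd (ek ν) 𝓗)) = dd (ek ν) h :=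
    fun ν => dd_comm3 h𝓗 (ek σ) (ek ρ) (ek ν)
  simp only [comm1, comm2, comm3] at E1p
  rw [Finset.sum_add_distrib, Finset.sum_add_distrib, Finset.sum_add_distrib] at E1p
  -- E2: metricity equation
  have m := hmetrical μ ρ σ p
  have hcm : ∀ (v : Phase n) (q : Phase n),
      dd v (fun q' => (1/2 : ℝ) * dd (ek ρ) (dd (ek σ) 𝓗) q') q
        = (1/2 : ℝ) * dd v h q :=
    fun v q => dd_const_mul_pt v _ (hhs.differentiable (by simp) q)
  simp only [hderiv_eq, gHam_eq, pdk_eq, hcm] at m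
  have s4 : ∑ ν, N ν μ p * ((1/2 : ℝ) * dd (ek ν) h p)
      = (1/2 : ℝ) * ∑ ν, N ν μ p * dd (ek ν) h p := by
    rw [Finset.mul_sum]; exact Finset.sum_congr rfl fun ν _ => by ring
  have s2 : ∑ lam, (1/2 : ℝ) * dd (ek lam) (dd (ek σ) 𝓗) p * dd (ek ρ) (N lam μ) p
      = (1/2 : ℝ) * ∑ ν, dd (ek ρ) (N ν μ) p * dd (ek ν) (dd (ek σ) 𝓗) p := by
    rw [Finset.mul_sum]; exact Finset.sum_congr rfl fun ν _ => by ring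
  have s3 : ∑ lam, (1/2 : ℝ) * dd (ek ρ) (dd (ek lam) 𝓗) p * dd (ek σ) (N lam μ) p
      = (1/2 : ℝ) * ∑ ν, dd (ek σ) (N ν μ) p * dd (ek ρ) (dd (ek ν) 𝓗) p := by
    rw [Finset.mul_sum]; exact Finset.sum_congr rfl fun ν _ => by ring
  rw [s4, s2, s3] at m
  -- conclude
  have htarget : ∑ ν, pdk σ (pdk ρ (N μ ν)) p * pdk ν 𝓗 p
      = ∑ ν, dd (ek σ) (dd (ek ρ) (N ν μ)) p * dd (ek ν) 𝓗 p := by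
    simp only [pdk_eq]
    exact Finset.sum_congr rfl fun ν _ => by rw [hNsym μ ν]
  rw [htarget]
  linarith [E1p, m]
end

section
/- Let N be a nonlinear connection and 𝓗 a smooth autoparallel function which is r-homogeneous in momenta for some real r, i.e. k_ρ ∂̄^ρ 𝓗 = r 𝓗. Then ∂̄^σ 𝓗 · (N_{μσ} − k_ρ H^ρ_{μσ}) = 0 (sum over σ and ρ) for every μ, where H^ρ_{μσ} := ∂̄^ρ N_{μσ}. -/
open scoped BigOperators

/-- If an autoparallel `𝓗` is `r`-homogeneous in momenta, then
`∂̄^σ 𝓗 (N_{μσ} − k_ρ H^ρ_{μσ}) = 0`, with `H^ρ_{μσ} = ∂̄^ρ N_{μσ}`. -/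
theorem pdk_contract_cartan_defect_eq_zero {n : ℕ} (hn : 0 < n)
    (N : Fin n → Fin n → Phase n → ℝ)
    (hNsmooth : ∀ μ ν, ContDiff ℝ (⊤ : ℕ∞) (N μ ν))
    (hNsym : ∀ μ ν, N μ ν = N ν μ)
    (𝓗 : Phase n → ℝ) (h𝓗 : ContDiff ℝ (⊤ : ℕ∞) 𝓗)
    (hauto : ∀ μ p, hderiv N μ 𝓗 p = 0)
    (r : ℝ)
    (hhom : ∀ p : Phase n, ∑ ρ, p.2 ρ * pdk ρ 𝓗 p = r * 𝓗 p) :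
    ∀ μ (p : Phase n),
      ∑ σ, pdk σ 𝓗 p * (N μ σ p - ∑ ρ, p.2 ρ * pdk ρ (N μ σ) p) = 0 := by
  intro μ p
  classical
  -- directions
  set e : Fin n → Phase n := fun i => (Pi.single i 1, 0) with he
  set u : Fin n → Phase n := fun i => (0, Pi.single i 1) with hu
  -- first derivative facts
  have hf' : ∀ y, HasFDerivAt 𝓗 (fderiv ℝ 𝓗 y) y :=
    fun y => (h𝓗.differentiable (by simp) y).hasFDerivAt
  have hDf : ContDiff ℝ (⊤ : ℕ∞) (fderiv ℝ 𝓗) := h𝓗.fderiv_right (by simp)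
  have hf'' : HasFDerivAt (fderiv ℝ 𝓗) (fderiv ℝ (fderiv ℝ 𝓗) p) p :=
    ((hDf.differentiable (by simp)) p).hasFDerivAt
  set B := fderiv ℝ (fderiv ℝ 𝓗) p with hB
  have hsymm : ∀ v w, B v w = B w v := second_derivative_symmetric hf' hf''
  -- derivative of directional derivative functions
  have hpd : ∀ w : Phase n, HasFDerivAt (fun q => fderiv ℝ 𝓗 q w)
      ((ContinuousLinearMap.apply ℝ ℝ w).comp B) p :=
    fun w => ((ContinuousLinearMap.apply ℝ ℝ w).hasFDerivAt).comp p hf''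
  -- differentiate the autoparallel equation
  have hA : ∀ v : Phase n,
      B v (e μ)
        + ∑ ν, (N ν μ p * B v (u ν) + pdk ν 𝓗 p * fderiv ℝ (N ν μ) p v) = 0 := by
    intro v
    have h1 : HasFDerivAt (fun q => hderiv N μ 𝓗 q)
        (((ContinuousLinearMap.apply ℝ ℝ (e μ)).comp B)
          + ∑ ν, (N ν μ p • ((ContinuousLinearMap.apply ℝ ℝ (u ν)).comp B)
              + pdk ν 𝓗 p • fderiv ℝ (N ν μ) p)) p := by
      have hsum : HasFDerivAt (fun q => ∑ ν, N ν μ q * pdk ν 𝓗 q)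
          (∑ ν, (N ν μ p • ((ContinuousLinearMap.apply ℝ ℝ (u ν)).comp B)
              + pdk ν 𝓗 p • fderiv ℝ (N ν μ) p)) p := by
        refine HasFDerivAt.fun_sum fun ν _ => ?_
        exact (((hNsmooth ν μ).differentiable (by simp) p).hasFDerivAt).mul (hpd (u ν))
      exact (hpd (e μ)).add hsum
    have h0 : HasFDerivAt (fun q => hderiv N μ 𝓗 q) (0 : Phase n →L[ℝ] ℝ) p := by
      have : (fun q => hderiv N μ 𝓗 q) = fun _ => (0 : ℝ) := funext (hauto μ)
      rw [this]; exact hasFDerivAt_const 0 p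
    have heq := h1.unique h0
    have := congrArg (fun L => L v) heq
    simpa [ContinuousLinearMap.add_apply, ContinuousLinearMap.sum_apply,
      ContinuousLinearMap.smul_apply, ContinuousLinearMap.comp_apply,
      ContinuousLinearMap.apply_apply, smul_eq_mul, mul_comm] using this
  -- differentiate the homogeneity equation
  have hHcoord : ∀ ρ : Fin n, HasFDerivAt (fun q : Phase n => q.2 ρ)
      (((ContinuousLinearMap.proj ρ : (Fin n → ℝ) →L[ℝ] ℝ).comp
        (ContinuousLinearMap.snd ℝ (Fin n → ℝ) (Fin n → ℝ)))) p :=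
    fun ρ => (((ContinuousLinearMap.proj ρ : (Fin n → ℝ) →L[ℝ] ℝ).comp
        (ContinuousLinearMap.snd ℝ (Fin n → ℝ) (Fin n → ℝ)))).hasFDerivAt
  have hBhom : ∀ w : Phase n,
      (∑ ρ, (p.2 ρ * B w (u ρ) + pdk ρ 𝓗 p * w.2 ρ)) = r * fderiv ℝ 𝓗 p w := by
    intro w
    have h1 : HasFDerivAt (fun q : Phase n => ∑ ρ, q.2 ρ * pdk ρ 𝓗 q)
        (∑ ρ, (p.2 ρ • ((ContinuousLinearMap.apply ℝ ℝ (u ρ)).comp B)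
            + pdk ρ 𝓗 p • ((ContinuousLinearMap.proj ρ : (Fin n → ℝ) →L[ℝ] ℝ).comp
              (ContinuousLinearMap.snd ℝ (Fin n → ℝ) (Fin n → ℝ))))) p := by
      refine HasFDerivAt.fun_sum fun ρ _ => ?_
      exact (hHcoord ρ).mul (hpd (u ρ))
    have h2 : HasFDerivAt (fun q : Phase n => r * 𝓗 q) (r • fderiv ℝ 𝓗 p) p :=
      (hf' p).const_mul r
    have h0 : (fun q : Phase n => ∑ ρ, q.2 ρ * pdk ρ 𝓗 q) = fun q => r * 𝓗 q :=
      funext hhom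
    have heq := h1.unique (h0 ▸ h2)
    have := congrArg (fun L => L w) heq
    simpa [ContinuousLinearMap.add_apply, ContinuousLinearMap.sum_apply,
      ContinuousLinearMap.smul_apply, ContinuousLinearMap.comp_apply,
      ContinuousLinearMap.apply_apply, smul_eq_mul] using this
  -- specialize homogeneity derivative: x-direction
  have hx : ∑ ρ, p.2 ρ * B (e μ) (u ρ) = r * pdx μ 𝓗 p := by
    have := hBhom (e μ)
    simp only [he] at this ⊢
    simpa [pdx, Finset.sum_add_distrib] using this
  -- k-directions
  have hk : ∀ ν, ∑ ρ, p.2 ρ * B (u ν) (u ρ) = (r - 1) * pdk ν 𝓗 p := by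
    intro ν
    have := hBhom (u ν)
    have hsingle : ∑ ρ, pdk ρ 𝓗 p * (Pi.single ν 1 : Fin n → ℝ) ρ = pdk ν 𝓗 p := by
      rw [Finset.sum_eq_single ν]
      · simp
      · intro b _ hb; simp [Pi.single_apply, hb]
      · simp
    rw [Finset.sum_add_distrib] at this
    have hrfl : ∀ w : Phase n, fderiv ℝ 𝓗 p w = pdk ν 𝓗 p → True := fun _ _ => trivial
    have hw : (u ν).2 = (Pi.single ν 1 : Fin n → ℝ) := by rw [hu]
    simp only [hw] at this
    rw [hsingle] at this
    have hfd : fderiv ℝ 𝓗 p (u ν) = pdk ν 𝓗 p := by rw [hu]; rfl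
    rw [hfd] at this
    linarith
  -- contract hA with momenta
  have hmain : ∑ ρ, p.2 ρ *
      (B (u ρ) (e μ) + ∑ ν, (N ν μ p * B (u ρ) (u ν) + pdk ν 𝓗 p * pdk ρ (N ν μ) p)) = 0 := by
    apply Finset.sum_eq_zero
    intro ρ _
    have := hA (u ρ)
    have hfd : ∀ ν, fderiv ℝ (N ν μ) p (u ρ) = pdk ρ (N ν μ) p := by
      intro ν; simp [pdk, hu]
    simp only [hfd] at this
    rw [this, mul_zero]
  -- expand and rearrange
  have hmain' : (∑ ρ, p.2 ρ * B (u ρ) (e μ))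
      + ((∑ ρ, ∑ ν, p.2 ρ * (N ν μ p * B (u ρ) (u ν)))
        + (∑ ρ, ∑ ν, p.2 ρ * (pdk ν 𝓗 p * pdk ρ (N ν μ) p))) = 0 := by
    rw [← Finset.sum_add_distrib, ← Finset.sum_add_distrib]
    rw [← hmain]
    apply Finset.sum_congr rfl
    intro ρ _
    rw [mul_add, Finset.mul_sum]
    rw [← Finset.sum_add_distrib]
    ring_nf
  have h1 : ∑ ρ, p.2 ρ * B (u ρ) (e μ) = r * pdx μ 𝓗 p := by
    rw [← hx]
    exact Finset.sum_congr rfl fun ρ _ => by rw [hsymm (u ρ) (e μ)]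
  set S : ℝ := ∑ ν, N ν μ p * pdk ν 𝓗 p with hS
  have h2 : ∑ ρ, ∑ ν, p.2 ρ * (N ν μ p * B (u ρ) (u ν)) = (r - 1) * S := by
    rw [Finset.sum_comm, hS, Finset.mul_sum]
    apply Finset.sum_congr rfl
    intro ν _
    have : ∑ ρ, p.2 ρ * (N ν μ p * B (u ρ) (u ν))
        = N ν μ p * ∑ ρ, p.2 ρ * B (u ν) (u ρ) := by
      rw [Finset.mul_sum]
      exact Finset.sum_congr rfl fun ρ _ => by rw [hsymm (u ρ) (u ν)]; ring
    rw [this, hk ν]; ring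
  have h3 : ∑ ρ, ∑ ν, p.2 ρ * (pdk ν 𝓗 p * pdk ρ (N ν μ) p)
      = ∑ ν, pdk ν 𝓗 p * ∑ ρ, p.2 ρ * pdk ρ (N ν μ) p := by
    rw [Finset.sum_comm]
    apply Finset.sum_congr rfl
    intro ν _
    rw [Finset.mul_sum]
    exact Finset.sum_congr rfl fun ρ _ => by ring
  have hA0 : pdx μ 𝓗 p = -S := by
    have := hauto μ p
    rw [hderiv] at this
    linarith
  have hcontr : ∑ ν, pdk ν 𝓗 p * ∑ ρ, p.2 ρ * pdk ρ (N ν μ) p = S := by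
    rw [h1, h2, h3, hA0] at hmain'
    linarith
  -- finish
  have : ∑ σ, pdk σ 𝓗 p * (N μ σ p - ∑ ρ, p.2 ρ * pdk ρ (N μ σ) p)
      = S - ∑ ν, pdk ν 𝓗 p * ∑ ρ, p.2 ρ * pdk ρ (N ν μ) p := by
    rw [hS, ← Finset.sum_sub_distrib]
    apply Finset.sum_congr rfl
    intro σ _
    rw [hNsym μ σ]
    ring
  rw [this, hcontr, sub_self]
end

section
/- Let N be a nonlinear connection and 𝓗 a smooth autoparallel function which is 2-homogeneous in momenta (k_ρ ∂̄^ρ 𝓗 = 2 𝓗), whose Hamilton metric g_H^{μν} := (1/2) ∂̄^μ ∂̄^ν 𝓗 is horizontally metrical and invertible at every point. Then the connections are of Cartan type: N_{μν} = k_ρ H^ρ_{μν} with H^ρ_{μν} := ∂̄^ρ N_{μν}, and the vertical connection C^{ρμν} := −(1/2) ∂̄^ρ g_H^{μν} satisfies k_ρ C^{ρμν} = 0, i.e. k_ρ ∂̄^ρ g_H^{μν} = 0, for all μ, ν. -/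
open scoped BigOperators

/-! ### Auxiliary directional-derivative machinery -/

/-- Directional derivative along a fixed vector `v`. -/
noncomputable def pd {n : ℕ} (v : Phase n) (f : Phase n → ℝ) (p : Phase n) : ℝ :=
  fderiv ℝ f p v

lemma pd_congr {n : ℕ} {f g : Phase n → ℝ} (h : ∀ p, f p = g p) (v : Phase n) (p : Phase n) :
    pd v f p = pd v g p := by
  have : f = g := funext h
  rw [this]

lemma ContDiff.pd {n : ℕ} {f : Phase n → ℝ} (hf : ContDiff ℝ (⊤ : ℕ∞) f) (v : Phase n) :
    ContDiff ℝ (⊤ : ℕ∞) (pd v f) := by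
  have h1 : ContDiff ℝ (⊤ : ℕ∞) (fderiv ℝ f) := hf.fderiv_right (by simp)
  exact h1.clm_apply contDiff_const

lemma pd_add {n : ℕ} {f g : Phase n → ℝ} {p : Phase n} (v : Phase n)
    (hf : DifferentiableAt ℝ f p) (hg : DifferentiableAt ℝ g p) :
    pd v (fun q => f q + g q) p = pd v f p + pd v g p := by
  unfold pd
  rw [fderiv_fun_add hf hg]
  simp

lemma pd_mul {n : ℕ} {f g : Phase n → ℝ} {p : Phase n} (v : Phase n)
    (hf : DifferentiableAt ℝ f p) (hg : DifferentiableAt ℝ g p) :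
    pd v (fun q => f q * g q) p = pd v f p * g p + f p * pd v g p := by
  unfold pd
  rw [fderiv_fun_mul hf hg]
  simp [smul_eq_mul]
  ring

lemma pd_sum {n : ℕ} {ι : Type*} (s : Finset ι) {f : ι → Phase n → ℝ} {p : Phase n} (v : Phase n)
    (hf : ∀ i ∈ s, DifferentiableAt ℝ (f i) p) :
    pd v (fun q => ∑ i ∈ s, f i q) p = ∑ i ∈ s, pd v (f i) p := by
  unfold pd
  rw [fderiv_fun_sum hf]
  simp

lemma pd_const_mul {n : ℕ} {f : Phase n → ℝ} {p : Phase n} (c : ℝ) (v : Phase n)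
    (hf : DifferentiableAt ℝ f p) :
    pd v (fun q => c * f q) p = c * pd v f p := by
  unfold pd
  rw [fderiv_const_mul hf]
  simp

lemma pd_snd {n : ℕ} (σ : Fin n) (v : Phase n) (p : Phase n) :
    pd v (fun q => q.2 σ) p = v.2 σ := by
  unfold pd
  have : (fun q : Phase n => q.2 σ) =
      ((ContinuousLinearMap.proj σ).comp (ContinuousLinearMap.snd ℝ (Fin n → ℝ) (Fin n → ℝ)) :
        Phase n →L[ℝ] ℝ) := rfl
  rw [this, ContinuousLinearMap.fderiv]
  rfl

lemma pd_comm {n : ℕ} {f : Phase n → ℝ} (hf : ContDiff ℝ (⊤ : ℕ∞) f) (v w : Phase n) (p : Phase n) :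
    pd v (pd w f) p = pd w (pd v f) p := by
  have hdf : Differentiable ℝ (fderiv ℝ f) :=
    (hf.fderiv_right (m := (⊤ : ℕ∞)) (by simp)).differentiable (by simp)
  have key : ∀ a b : Phase n, pd a (pd b f) p = fderiv ℝ (fderiv ℝ f) p a b := by
    intro a b
    unfold pd
    rw [fderiv_clm_apply (hdf p) (differentiableAt_const b)]
    simp
  rw [key, key]
  exact (hf.contDiffAt.isSymmSndFDerivAt (by rw [minSmoothness_of_isRCLikeNormedField]; exact WithTop.coe_le_coe.mpr le_top)) v w

lemma diffAt_snd {n : ℕ} (σ : Fin n) (p : Phase n) :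
    DifferentiableAt ℝ (fun q : Phase n => q.2 σ) p :=
  ((ContinuousLinearMap.proj σ).comp
    (ContinuousLinearMap.snd ℝ (Fin n → ℝ) (Fin n → ℝ))).differentiableAt

/-- For a 2-homogeneous autoparallel `𝓗` with horizontally metrical, everywhere
invertible Hamilton metric, the connections are of Cartan type:
`N_{μν} = k_ρ H^ρ_{μν}` and `k_ρ C^{ρμν} = 0` where
`C^{ρμν} = −(1/2) ∂̄^ρ g_H^{μν}`, i.e. `k_ρ ∂̄^ρ g_H^{μν} = 0`. -/
theorem cartan_type_of_two_homogeneous {n : ℕ} (hn : 0 < n)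
    (N : Fin n → Fin n → Phase n → ℝ)
    (hNsmooth : ∀ μ ν, ContDiff ℝ (⊤ : ℕ∞) (N μ ν))
    (hNsym : ∀ μ ν, N μ ν = N ν μ)
    (𝓗 : Phase n → ℝ) (h𝓗 : ContDiff ℝ (⊤ : ℕ∞) 𝓗)
    (hauto : ∀ μ p, hderiv N μ 𝓗 p = 0)
    (hhom : ∀ p : Phase n, ∑ ρ, p.2 ρ * pdk ρ 𝓗 p = 2 * 𝓗 p)
    (hmetrical : ∀ μ ρ σ p, hderiv N μ (gHam 𝓗 ρ σ) p
        + ∑ lam, gHam 𝓗 lam σ p * pdk ρ (N lam μ) p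
        + ∑ lam, gHam 𝓗 ρ lam p * pdk σ (N lam μ) p = 0)
    (hinv : ∀ p : Phase n, IsUnit (Matrix.of fun μ ν => gHam 𝓗 μ ν p)) :
    (∀ μ ν (p : Phase n), N μ ν p = ∑ ρ, p.2 ρ * pdk ρ (N μ ν) p) ∧
    (∀ μ ν (p : Phase n),
      ∑ ρ, p.2 ρ * (-(1 / 2 : ℝ) * pdk ρ (gHam 𝓗 μ ν) p) = 0) ∧
    (∀ μ ν (p : Phase n), ∑ ρ, p.2 ρ * pdk ρ (gHam 𝓗 μ ν) p = 0) := by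
  classical
  -- notation for vertical and horizontal basis directions
  set ek : Fin n → Phase n := fun μ => ((0 : Fin n → ℝ), Pi.single μ 1) with hek
  set ex : Fin n → Phase n := fun μ => (Pi.single μ 1, (0 : Fin n → ℝ)) with hex
  have pdk_pd : ∀ (μ : Fin n) (f : Phase n → ℝ), pdk μ f = pd (ek μ) f := fun _ _ => rfl
  have pdx_pd : ∀ (μ : Fin n) (f : Phase n → ℝ), pdx μ f = pd (ex μ) f := fun _ _ => rfl
  -- differentiability facts
  have hNd : ∀ ν μ (p : Phase n), DifferentiableAt ℝ (N ν μ) p := fun ν μ p =>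
    ((hNsmooth ν μ).differentiable (by simp)).differentiableAt
  have h𝓗d : ∀ p : Phase n, DifferentiableAt ℝ 𝓗 p := fun p =>
    (h𝓗.differentiable (by simp)).differentiableAt
  have h1 : ∀ ρ : Fin n, ContDiff ℝ (⊤ : ℕ∞) (pdk ρ 𝓗) := fun ρ => by
    rw [pdk_pd]; exact h𝓗.pd _
  have h1x : ∀ ρ : Fin n, ContDiff ℝ (⊤ : ℕ∞) (pdx ρ 𝓗) := fun ρ => by
    rw [pdx_pd]; exact h𝓗.pd _
  have h2 : ∀ σ ρ : Fin n, ContDiff ℝ (⊤ : ℕ∞) (pdk σ (pdk ρ 𝓗)) := fun σ ρ => by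
    rw [pdk_pd]; exact (h1 ρ).pd _
  have h1d : ∀ (ρ : Fin n) (p : Phase n), DifferentiableAt ℝ (pdk ρ 𝓗) p := fun ρ p =>
    ((h1 ρ).differentiable (by simp)).differentiableAt
  have h2d : ∀ (σ ρ : Fin n) (p : Phase n), DifferentiableAt ℝ (pdk σ (pdk ρ 𝓗)) p :=
    fun σ ρ p => ((h2 σ ρ).differentiable (by simp)).differentiableAt
  have hgfun : ∀ ρ σ : Fin n, gHam 𝓗 ρ σ = fun q => (1 / 2 : ℝ) * pdk ρ (pdk σ 𝓗) q :=
    fun ρ σ => rfl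
  have hgc : ∀ ρ σ : Fin n, ContDiff ℝ (⊤ : ℕ∞) (gHam 𝓗 ρ σ) := fun ρ σ => by
    rw [hgfun]; exact contDiff_const.mul (h2 ρ σ)
  have hgd : ∀ (ρ σ : Fin n) (p : Phase n), DifferentiableAt ℝ (gHam 𝓗 ρ σ) p := fun ρ σ p =>
    ((hgc ρ σ).differentiable (by simp)).differentiableAt
  -- Euler step 1 : ∑ ρ, k_ρ ∂̄^μ ∂̄^ρ 𝓗 = ∂̄^μ 𝓗
  have stepA : ∀ (μ : Fin n) (p : Phase n),
      ∑ ρ, p.2 ρ * pdk μ (pdk ρ 𝓗) p = pdk μ 𝓗 p := by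
    intro μ p
    have h := pd_congr (f := fun q : Phase n => ∑ ρ, q.2 ρ * pdk ρ 𝓗 q)
      (g := fun q => 2 * 𝓗 q) hhom (ek μ) p
    have hL : pd (ek μ) (fun q : Phase n => ∑ ρ, q.2 ρ * pdk ρ 𝓗 q) p
        = ∑ ρ, ((Pi.single μ 1 : Fin n → ℝ) ρ * pdk ρ 𝓗 p + p.2 ρ * pdk μ (pdk ρ 𝓗) p) := by
      rw [pd_sum Finset.univ (ek μ)
        (fun i _ => (diffAt_snd i p).fun_mul (h1d i p))]
      refine Finset.sum_congr rfl fun ρ _ => ?_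
      rw [pd_mul (ek μ) (diffAt_snd ρ p) (h1d ρ p), pd_snd, pdk_pd]
      rfl
    have hR : pd (ek μ) (fun q => 2 * 𝓗 q) p = 2 * pdk μ 𝓗 p := by
      rw [pd_const_mul 2 (ek μ) (h𝓗d p), pdk_pd]
    have hsingle : ∑ ρ, (Pi.single μ 1 : Fin n → ℝ) ρ * pdk ρ 𝓗 p = pdk μ 𝓗 p := by
      simp [Pi.single_apply]
    rw [hL, hR, Finset.sum_add_distrib, hsingle] at h
    linarith
  -- Euler step 2 : ∑ ρ, k_ρ ∂̄^ν ∂̄^μ ∂̄^ρ 𝓗 = 0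
  have stepB : ∀ (μ ν : Fin n) (p : Phase n),
      ∑ ρ, p.2 ρ * pdk ν (pdk μ (pdk ρ 𝓗)) p = 0 := by
    intro μ ν p
    have h := pd_congr (f := fun q : Phase n => ∑ ρ, q.2 ρ * pdk μ (pdk ρ 𝓗) q)
      (g := fun q => pdk μ 𝓗 q) (stepA μ) (ek ν) p
    have hL : pd (ek ν) (fun q : Phase n => ∑ ρ, q.2 ρ * pdk μ (pdk ρ 𝓗) q) p
        = ∑ ρ, ((Pi.single ν 1 : Fin n → ℝ) ρ * pdk μ (pdk ρ 𝓗) p + p.2 ρ * pdk ν (pdk μ (pdk ρ 𝓗)) p) := by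
      rw [pd_sum Finset.univ (ek ν)
        (fun i _ => (diffAt_snd i p).fun_mul (h2d μ i p))]
      refine Finset.sum_congr rfl fun ρ _ => ?_
      rw [pd_mul (ek ν) (diffAt_snd ρ p) (h2d μ ρ p), pd_snd, pdk_pd]
      rfl
    have hR : pd (ek ν) (fun q => pdk μ 𝓗 q) p = pdk ν (pdk μ 𝓗) p := by
      rw [pdk_pd ν]
    have hsingle : ∑ ρ, (Pi.single ν 1 : Fin n → ℝ) ρ * pdk μ (pdk ρ 𝓗) p = pdk μ (pdk ν 𝓗) p := by
      simp [Pi.single_apply]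
    have hcomm : pdk μ (pdk ν 𝓗) p = pdk ν (pdk μ 𝓗) p := by
      simp only [pdk_pd]; exact pd_comm h𝓗 _ _ p
    rw [hL, hR, Finset.sum_add_distrib, hsingle, hcomm] at h
    linarith
  -- full symmetry of third derivatives
  have perm3 : ∀ (ρ μ ν : Fin n) (p : Phase n),
      pdk ρ (pdk μ (pdk ν 𝓗)) p = pdk ν (pdk μ (pdk ρ 𝓗)) p := by
    intro ρ μ ν p
    simp only [pdk_pd]
    calc pd (ek ρ) (pd (ek μ) (pd (ek ν) 𝓗)) p
        = pd (ek μ) (pd (ek ρ) (pd (ek ν) 𝓗)) p := pd_comm (h𝓗.pd _) _ _ p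
      _ = pd (ek μ) (pd (ek ν) (pd (ek ρ) 𝓗)) p :=
          pd_congr (fun q => pd_comm h𝓗 _ _ q) _ p
      _ = pd (ek ν) (pd (ek μ) (pd (ek ρ) 𝓗)) p := pd_comm (h𝓗.pd _) _ _ p
  -- goal 3
  have goal3 : ∀ (μ ν : Fin n) (p : Phase n), ∑ ρ, p.2 ρ * pdk ρ (gHam 𝓗 μ ν) p = 0 := by
    intro μ ν p
    have e1 : ∀ ρ : Fin n, pdk ρ (gHam 𝓗 μ ν) p
        = (1 / 2 : ℝ) * pdk ν (pdk μ (pdk ρ 𝓗)) p := by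
      intro ρ
      rw [hgfun, pdk_pd, pd_const_mul (1/2 : ℝ) (ek ρ) (h2d μ ν p), ← pdk_pd, perm3]
    calc ∑ ρ, p.2 ρ * pdk ρ (gHam 𝓗 μ ν) p
        = (1 / 2 : ℝ) * ∑ ρ, p.2 ρ * pdk ν (pdk μ (pdk ρ 𝓗)) p := by
          rw [Finset.mul_sum]
          exact Finset.sum_congr rfl fun ρ _ => by rw [e1 ρ]; ring
      _ = 0 := by rw [stepB μ ν p]; ring
  -- contraction of the metric with k : ∑ σ, k_σ g^{ρσ} = (1/2) ∂̄^ρ 𝓗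
  have stepE : ∀ (ρ : Fin n) (p : Phase n),
      ∑ σ, p.2 σ * gHam 𝓗 ρ σ p = (1 / 2 : ℝ) * pdk ρ 𝓗 p := by
    intro ρ p
    calc ∑ σ, p.2 σ * gHam 𝓗 ρ σ p
        = (1 / 2 : ℝ) * ∑ σ, p.2 σ * pdk ρ (pdk σ 𝓗) p := by
          rw [Finset.mul_sum]
          exact Finset.sum_congr rfl fun σ _ => by rw [hgfun]; ring
      _ = (1 / 2 : ℝ) * pdk ρ 𝓗 p := by rw [stepA ρ p]
  -- horizontal derivative of ℓ^ρ = ∂̄^ρ 𝓗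
  have stepD : ∀ (μ ρ : Fin n) (p : Phase n),
      hderiv N μ (pdk ρ 𝓗) p = -∑ ν, pdk ρ (N ν μ) p * pdk ν 𝓗 p := by
    intro μ ρ p
    have h := pd_congr (f := fun q : Phase n => hderiv N μ 𝓗 q)
      (g := fun _ => 0) (hauto μ) (ek ρ) p
    have hfun : (fun q : Phase n => hderiv N μ 𝓗 q)
        = fun q => pdx μ 𝓗 q + ∑ ν, N ν μ q * pdk ν 𝓗 q := rfl
    have hzero : pd (ek ρ) (fun _ : Phase n => (0 : ℝ)) p = 0 := by
      unfold pd; simp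
    have hsumd : DifferentiableAt ℝ (fun q : Phase n => ∑ ν, N ν μ q * pdk ν 𝓗 q) p :=
      DifferentiableAt.fun_sum fun i _ => (hNd i μ p).mul (h1d i p)
    have hxd : DifferentiableAt ℝ (pdx μ 𝓗) p :=
      ((h1x μ).differentiable (by simp)).differentiableAt
    have hL : pd (ek ρ) (fun q : Phase n => hderiv N μ 𝓗 q) p
        = pdk ρ (pdx μ 𝓗) p
          + ∑ ν, (pdk ρ (N ν μ) p * pdk ν 𝓗 p + N ν μ p * pdk ρ (pdk ν 𝓗) p) := by
      rw [hfun, pd_add (ek ρ) hxd hsumd,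
        pd_sum Finset.univ (ek ρ) (fun i _ => (hNd i μ p).fun_mul (h1d i p))]
      congr 1
      refine Finset.sum_congr rfl fun ν _ => ?_
      rw [pd_mul (ek ρ) (hNd ν μ p) (h1d ν p)]
      rfl
    rw [hL, hzero] at h
    have hmix : pdk ρ (pdx μ 𝓗) p = pdx μ (pdk ρ 𝓗) p := by
      simp only [pdk_pd, pdx_pd]; exact pd_comm h𝓗 _ _ p
    have hcomm : ∀ ν : Fin n, pdk ρ (pdk ν 𝓗) p = pdk ν (pdk ρ 𝓗) p := by
      intro ν; simp only [pdk_pd]; exact pd_comm h𝓗 _ _ p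
    have hsplit : ∑ ν, (pdk ρ (N ν μ) p * pdk ν 𝓗 p + N ν μ p * pdk ρ (pdk ν 𝓗) p)
        = ∑ ν, pdk ρ (N ν μ) p * pdk ν 𝓗 p + ∑ ν, N ν μ p * pdk ν (pdk ρ 𝓗) p := by
      rw [Finset.sum_add_distrib]
      congr 1
      exact Finset.sum_congr rfl fun ν _ => by rw [hcomm ν]
    rw [hsplit, hmix] at h
    show pdx μ (pdk ρ 𝓗) p + ∑ ν, N ν μ p * pdk ν (pdk ρ 𝓗) p
        = -∑ ν, pdk ρ (N ν μ) p * pdk ν 𝓗 p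
    linarith
  -- the key contracted metricity identity
  have stepFG : ∀ (μ ρ : Fin n) (p : Phase n),
      ∑ lam, gHam 𝓗 ρ lam p * ((∑ σ, p.2 σ * pdk σ (N lam μ) p) - N lam μ p) = 0 := by
    intro μ ρ p
    -- K = ∑ σ, k_σ g^{ρσ}
    set K : Phase n → ℝ := fun q => ∑ σ, q.2 σ * gHam 𝓗 ρ σ q with hK
    have hKdsummand : ∀ (σ : Fin n) (q : Phase n),
        DifferentiableAt ℝ (fun q : Phase n => q.2 σ * gHam 𝓗 ρ σ q) q :=
      fun σ q => (diffAt_snd σ q).mul (hgd ρ σ q)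
    -- way 1 : via K = (1/2) ℓ^ρ
    have hway1 : hderiv N μ K p = (1 / 2 : ℝ) * hderiv N μ (pdk ρ 𝓗) p := by
      have hKfun : ∀ q, K q = (1 / 2 : ℝ) * pdk ρ 𝓗 q := stepE ρ
      show pdx μ K p + ∑ ν, N ν μ p * pdk ν K p
          = (1 / 2 : ℝ) * (pdx μ (pdk ρ 𝓗) p + ∑ ν, N ν μ p * pdk ν (pdk ρ 𝓗) p)
      have hx : pdx μ K p = (1 / 2 : ℝ) * pdx μ (pdk ρ 𝓗) p := by
        rw [pdx_pd, pd_congr hKfun (ex μ) p, pd_const_mul (1/2 : ℝ) (ex μ) (h1d ρ p),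
          ← pdx_pd]
      have hk : ∀ ν : Fin n, pdk ν K p = (1 / 2 : ℝ) * pdk ν (pdk ρ 𝓗) p := by
        intro ν
        rw [pdk_pd, pd_congr hKfun (ek ν) p, pd_const_mul (1/2 : ℝ) (ek ν) (h1d ρ p),
          ← pdk_pd]
      rw [hx]
      rw [Finset.sum_congr rfl fun ν _ => by rw [hk ν]]
      have hs : ∑ ν, N ν μ p * ((1 / 2 : ℝ) * pdk ν (pdk ρ 𝓗) p)
          = (1 / 2 : ℝ) * ∑ ν, N ν μ p * pdk ν (pdk ρ 𝓗) p := by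
        rw [Finset.mul_sum]
        exact Finset.sum_congr rfl fun ν _ => by ring
      rw [hs]
      ring
    -- way 2 : direct expansion
    have hway2 : hderiv N μ K p
        = ∑ σ, p.2 σ * hderiv N μ (gHam 𝓗 ρ σ) p + ∑ ν, N ν μ p * gHam 𝓗 ρ ν p := by
      have hx : pdx μ K p = ∑ σ, p.2 σ * pdx μ (gHam 𝓗 ρ σ) p := by
        rw [pdx_pd, hK, pd_sum Finset.univ (ex μ) (fun i _ => hKdsummand i p)]
        refine Finset.sum_congr rfl fun σ _ => ?_
        rw [pd_mul (ex μ) (diffAt_snd σ p) (hgd ρ σ p), pd_snd, pdx_pd]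
        show ((0 : Fin n → ℝ) σ) * gHam 𝓗 ρ σ p + _ = _
        simp
      have hk : ∀ ν : Fin n, pdk ν K p
          = gHam 𝓗 ρ ν p + ∑ σ, p.2 σ * pdk ν (gHam 𝓗 ρ σ) p := by
        intro ν
        rw [pdk_pd, hK, pd_sum Finset.univ (ek ν) (fun i _ => hKdsummand i p)]
        have : ∀ σ : Fin n, pd (ek ν) (fun q : Phase n => q.2 σ * gHam 𝓗 ρ σ q) p
            = (Pi.single ν 1 : Fin n → ℝ) σ * gHam 𝓗 ρ σ p + p.2 σ * pdk ν (gHam 𝓗 ρ σ) p := by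
          intro σ
          rw [pd_mul (ek ν) (diffAt_snd σ p) (hgd ρ σ p), pd_snd, pdk_pd]
        rw [Finset.sum_congr rfl fun σ _ => this σ, Finset.sum_add_distrib]
        congr 1
        simp [Pi.single_apply]
      have hsum : ∑ ν, N ν μ p * pdk ν K p
          = ∑ ν, N ν μ p * gHam 𝓗 ρ ν p
            + ∑ σ, p.2 σ * ∑ ν, N ν μ p * pdk ν (gHam 𝓗 ρ σ) p := by
        calc ∑ ν, N ν μ p * pdk ν K p
            = ∑ ν, (N ν μ p * gHam 𝓗 ρ ν p
                + ∑ σ, N ν μ p * (p.2 σ * pdk ν (gHam 𝓗 ρ σ) p)) := by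
              refine Finset.sum_congr rfl fun ν _ => ?_
              rw [hk ν, mul_add, Finset.mul_sum]
          _ = ∑ ν, N ν μ p * gHam 𝓗 ρ ν p
                + ∑ ν, ∑ σ, N ν μ p * (p.2 σ * pdk ν (gHam 𝓗 ρ σ) p) :=
              Finset.sum_add_distrib
          _ = ∑ ν, N ν μ p * gHam 𝓗 ρ ν p
                + ∑ σ, p.2 σ * ∑ ν, N ν μ p * pdk ν (gHam 𝓗 ρ σ) p := by
              congr 1
              rw [Finset.sum_comm]
              refine Finset.sum_congr rfl fun σ _ => ?_
              rw [Finset.mul_sum]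
              exact Finset.sum_congr rfl fun ν _ => by ring
      have hh : ∀ σ : Fin n, p.2 σ * hderiv N μ (gHam 𝓗 ρ σ) p
          = p.2 σ * pdx μ (gHam 𝓗 ρ σ) p
            + p.2 σ * ∑ ν, N ν μ p * pdk ν (gHam 𝓗 ρ σ) p := by
        intro σ
        show p.2 σ * (pdx μ (gHam 𝓗 ρ σ) p + ∑ ν, N ν μ p * pdk ν (gHam 𝓗 ρ σ) p) = _
        ring
      show pdx μ K p + ∑ ν, N ν μ p * pdk ν K p = _
      rw [hx, hsum, Finset.sum_congr rfl fun σ _ => hh σ, Finset.sum_add_distrib]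
      ring
    -- combine with stepD
    have hE4 : ∑ σ, p.2 σ * hderiv N μ (gHam 𝓗 ρ σ) p
        = -(1 / 2 : ℝ) * ∑ ν, pdk ρ (N ν μ) p * pdk ν 𝓗 p
          - ∑ ν, N ν μ p * gHam 𝓗 ρ ν p := by
      have := hway1
      rw [stepD μ ρ p] at this
      rw [hway2] at this
      linarith
    -- contract metricity with k
    have hmet : ∑ σ, p.2 σ * hderiv N μ (gHam 𝓗 ρ σ) p
        + ∑ σ, p.2 σ * ∑ lam, gHam 𝓗 lam σ p * pdk ρ (N lam μ) p
        + ∑ σ, p.2 σ * ∑ lam, gHam 𝓗 ρ lam p * pdk σ (N lam μ) p = 0 := by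
      have h0 : ∀ σ : Fin n, p.2 σ * hderiv N μ (gHam 𝓗 ρ σ) p
          + p.2 σ * ∑ lam, gHam 𝓗 lam σ p * pdk ρ (N lam μ) p
          + p.2 σ * ∑ lam, gHam 𝓗 ρ lam p * pdk σ (N lam μ) p = 0 := by
        intro σ
        have := hmetrical μ ρ σ p
        have h' : p.2 σ * (hderiv N μ (gHam 𝓗 ρ σ) p
            + ∑ lam, gHam 𝓗 lam σ p * pdk ρ (N lam μ) p
            + ∑ lam, gHam 𝓗 ρ lam p * pdk σ (N lam μ) p) = 0 := by rw [this]; ring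
        linarith [h']
      have := Finset.sum_congr rfl (fun σ (_ : σ ∈ Finset.univ) => h0 σ)
      rw [Finset.sum_const_zero] at this
      rw [← Finset.sum_add_distrib, ← Finset.sum_add_distrib]
      exact this
    -- simplify term 2
    have hT2 : ∑ σ, p.2 σ * ∑ lam, gHam 𝓗 lam σ p * pdk ρ (N lam μ) p
        = (1 / 2 : ℝ) * ∑ lam, pdk ρ (N lam μ) p * pdk lam 𝓗 p := by
      calc ∑ σ, p.2 σ * ∑ lam, gHam 𝓗 lam σ p * pdk ρ (N lam μ) p
          = ∑ σ, ∑ lam, p.2 σ * (gHam 𝓗 lam σ p * pdk ρ (N lam μ) p) :=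
            Finset.sum_congr rfl fun σ _ => Finset.mul_sum _ _ _
        _ = ∑ lam, ∑ σ, p.2 σ * (gHam 𝓗 lam σ p * pdk ρ (N lam μ) p) := Finset.sum_comm
        _ = ∑ lam, pdk ρ (N lam μ) p * ∑ σ, p.2 σ * gHam 𝓗 lam σ p := by
            refine Finset.sum_congr rfl fun lam _ => ?_
            rw [Finset.mul_sum]
            exact Finset.sum_congr rfl fun σ _ => by ring
        _ = ∑ lam, pdk ρ (N lam μ) p * ((1 / 2 : ℝ) * pdk lam 𝓗 p) :=
            Finset.sum_congr rfl fun lam _ => by rw [stepE lam p]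
        _ = (1 / 2 : ℝ) * ∑ lam, pdk ρ (N lam μ) p * pdk lam 𝓗 p := by
            rw [Finset.mul_sum]
            exact Finset.sum_congr rfl fun lam _ => by ring
    -- simplify term 3
    have hT3 : ∑ σ, p.2 σ * ∑ lam, gHam 𝓗 ρ lam p * pdk σ (N lam μ) p
        = ∑ lam, gHam 𝓗 ρ lam p * ∑ σ, p.2 σ * pdk σ (N lam μ) p := by
      calc ∑ σ, p.2 σ * ∑ lam, gHam 𝓗 ρ lam p * pdk σ (N lam μ) p
          = ∑ σ, ∑ lam, p.2 σ * (gHam 𝓗 ρ lam p * pdk σ (N lam μ) p) :=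
            Finset.sum_congr rfl fun σ _ => Finset.mul_sum _ _ _
        _ = ∑ lam, ∑ σ, p.2 σ * (gHam 𝓗 ρ lam p * pdk σ (N lam μ) p) := Finset.sum_comm
        _ = ∑ lam, gHam 𝓗 ρ lam p * ∑ σ, p.2 σ * pdk σ (N lam μ) p := by
            refine Finset.sum_congr rfl fun lam _ => ?_
            rw [Finset.mul_sum]
            exact Finset.sum_congr rfl fun σ _ => by ring
    -- put everything together
    have hfinal : ∑ lam, gHam 𝓗 ρ lam p * ∑ σ, p.2 σ * pdk σ (N lam μ) p
        - ∑ lam, gHam 𝓗 ρ lam p * N lam μ p = 0 := by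
      have hcomm' : ∑ ν, N ν μ p * gHam 𝓗 ρ ν p = ∑ lam, gHam 𝓗 ρ lam p * N lam μ p :=
        Finset.sum_congr rfl fun lam _ => mul_comm _ _
      rw [hE4, hT2, hT3] at hmet
      linarith [hmet, hcomm']
    calc ∑ lam, gHam 𝓗 ρ lam p * ((∑ σ, p.2 σ * pdk σ (N lam μ) p) - N lam μ p)
        = ∑ lam, (gHam 𝓗 ρ lam p * ∑ σ, p.2 σ * pdk σ (N lam μ) p
            - gHam 𝓗 ρ lam p * N lam μ p) :=
          Finset.sum_congr rfl fun lam _ => mul_sub _ _ _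
      _ = ∑ lam, gHam 𝓗 ρ lam p * ∑ σ, p.2 σ * pdk σ (N lam μ) p
            - ∑ lam, gHam 𝓗 ρ lam p * N lam μ p := Finset.sum_sub_distrib _ _
      _ = 0 := hfinal
  -- invert the metric
  have stepH : ∀ (μ lam : Fin n) (p : Phase n),
      N lam μ p = ∑ σ, p.2 σ * pdk σ (N lam μ) p := by
    intro μ lam p
    set M : Matrix (Fin n) (Fin n) ℝ := Matrix.of fun a b => gHam 𝓗 a b p with hM
    set w : Fin n → ℝ := fun l => (∑ σ, p.2 σ * pdk σ (N l μ) p) - N l μ p with hw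
    have hMv : M.mulVec w = 0 := by
      funext ρ
      have := stepFG μ ρ p
      simpa [M, w, Matrix.mulVec, dotProduct] using this
    have hdet : IsUnit M.det := (Matrix.isUnit_iff_isUnit_det M).mp (hinv p)
    have hw0 : w = 0 := by
      have h1 : M⁻¹.mulVec (M.mulVec w) = w := by
        rw [Matrix.mulVec_mulVec, Matrix.nonsing_inv_mul M hdet, Matrix.one_mulVec]
      rw [hMv, Matrix.mulVec_zero] at h1
      exact h1.symm
    have := congrFun hw0 lam
    simp only [hw, Pi.zero_apply] at this
    linarith
  refine ⟨fun μ ν p => stepH ν μ p, fun μ ν p => ?_, goal3⟩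
  have h := goal3 μ ν p
  calc ∑ ρ, p.2 ρ * (-(1 / 2 : ℝ) * pdk ρ (gHam 𝓗 μ ν) p)
      = -(1 / 2 : ℝ) * ∑ ρ, p.2 ρ * pdk ρ (gHam 𝓗 μ ν) p := by
        rw [Finset.mul_sum]
        exact Finset.sum_congr rfl fun ρ _ => by ring
    _ = 0 := by rw [h]; ring
end

section
/- Let N be a smooth nonlinear connection with horizontal connection coefficients H^ρ_{μν} := ∂̄^ρ N_{μν}. Then the momentum derivative of the d-curvature tensor equals the horizontal curvature tensor: ∂̄^σ R_{μνρ} = R^σ_{μνρ} for all indices μ, ν, ρ, σ, where R_{μνρ} := δ_ρ N_{νμ} − δ_ν N_{ρμ} and R^σ_{μνρ} := δ_ρ H^σ_{μν} − δ_ν H^σ_{μρ} + H^λ_{μν} H^σ_{λρ} − H^λ_{μρ} H^σ_{λν}. -/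
open scoped BigOperators

/-- The d-curvature tensor `R_{μνρ} = δ_ρ N_{νμ} − δ_ν N_{ρμ}`. -/
noncomputable def dcurv {n : ℕ} (N : Fin n → Fin n → Phase n → ℝ)
    (μ ν ρ : Fin n) (p : Phase n) : ℝ :=
  hderiv N ρ (N ν μ) p - hderiv N ν (N ρ μ) p

/-- The horizontal curvature tensor
`R^σ_{μνρ} = δ_ρ H^σ_{μν} − δ_ν H^σ_{μρ} + H^λ_{μν} H^σ_{λρ} − H^λ_{μρ} H^σ_{λν}`,
with `H^ρ_{μν} = ∂̄^ρ N_{μν}`. -/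
noncomputable def hcurv {n : ℕ} (N : Fin n → Fin n → Phase n → ℝ)
    (σ μ ν ρ : Fin n) (p : Phase n) : ℝ :=
  hderiv N ρ (pdk σ (N μ ν)) p - hderiv N ν (pdk σ (N μ ρ)) p
    + ∑ lam, pdk lam (N μ ν) p * pdk σ (N lam ρ) p
    - ∑ lam, pdk lam (N μ ρ) p * pdk σ (N lam ν) p

/-! ### Auxiliary directional-derivative machinery -/

/-- Directional derivative in direction `v`. -/
noncomputable def Dd {n : ℕ} (v : Phase n) (f : Phase n → ℝ) (p : Phase n) : ℝ :=
  fderiv ℝ f p v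

lemma pdk_eq_Dd {n : ℕ} (μ : Fin n) (f : Phase n → ℝ) :
    pdk μ f = Dd (0, Pi.single μ 1) f := rfl

lemma Dd_smooth {n : ℕ} {f : Phase n → ℝ} (hf : ContDiff ℝ (⊤ : ℕ∞) f) (v : Phase n) :
    ContDiff ℝ (⊤ : ℕ∞) (Dd v f) :=
  (hf.fderiv_right (by simp)).clm_apply contDiff_const

lemma Dd_Dd {n : ℕ} {f : Phase n → ℝ} (hf : ContDiff ℝ (⊤ : ℕ∞) f) (v w : Phase n)
    (p : Phase n) :
    Dd v (Dd w f) p = fderiv ℝ (fderiv ℝ f) p v w := by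
  have h2 : HasFDerivAt (fderiv ℝ f) (fderiv ℝ (fderiv ℝ f) p) p :=
    (((hf.fderiv_right (m := 1) (by exact WithTop.coe_le_coe.mpr le_top)).differentiable one_ne_zero) p).hasFDerivAt
  have h := h2.clm_apply (hasFDerivAt_const w p)
  have hD := h.fderiv
  show (fderiv ℝ (fun y => (fderiv ℝ f y) w) p) v = _
  rw [hD]
  simp

lemma Dd_comm {n : ℕ} {f : Phase n → ℝ} (hf : ContDiff ℝ (⊤ : ℕ∞) f) (v w : Phase n)
    (p : Phase n) :
    Dd v (Dd w f) p = Dd w (Dd v f) p := by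
  rw [Dd_Dd hf, Dd_Dd hf]
  exact second_derivative_symmetric
    (fun y => ((hf.differentiable (by simp)) y).hasFDerivAt)
    ((((hf.fderiv_right (m := 1) (by exact WithTop.coe_le_coe.mpr le_top)).differentiable one_ne_zero) p).hasFDerivAt) v w

lemma Dd_sub {n : ℕ} {f g : Phase n → ℝ} {p : Phase n} (hf : DifferentiableAt ℝ f p)
    (hg : DifferentiableAt ℝ g p) (v : Phase n) :
    Dd v (fun q => f q - g q) p = Dd v f p - Dd v g p := by
  simp [Dd, fderiv_fun_sub hf hg]

lemma Dd_add {n : ℕ} {f g : Phase n → ℝ} {p : Phase n} (hf : DifferentiableAt ℝ f p)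
    (hg : DifferentiableAt ℝ g p) (v : Phase n) :
    Dd v (fun q => f q + g q) p = Dd v f p + Dd v g p := by
  simp [Dd, fderiv_fun_add hf hg]

lemma Dd_mul {n : ℕ} {f g : Phase n → ℝ} {p : Phase n} (hf : DifferentiableAt ℝ f p)
    (hg : DifferentiableAt ℝ g p) (v : Phase n) :
    Dd v (fun q => f q * g q) p = Dd v f p * g p + f p * Dd v g p := by
  simp [Dd, fderiv_fun_mul hf hg]
  ring

lemma Dd_sum {n : ℕ} {ι : Type*} {s : Finset ι} {A : ι → Phase n → ℝ} {p : Phase n}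
    (h : ∀ i ∈ s, DifferentiableAt ℝ (A i) p) (v : Phase n) :
    Dd v (fun q => ∑ i ∈ s, A i q) p = ∑ i ∈ s, Dd v (A i) p := by
  simp [Dd, fderiv_fun_sum h]

lemma hderiv_eq_Dd {n : ℕ} (N : Fin n → Fin n → Phase n → ℝ) (ρ : Fin n)
    (f : Phase n → ℝ) :
    hderiv N ρ f = fun p =>
      Dd (Pi.single ρ 1, 0) f p + ∑ lam, N lam ρ p * Dd (0, Pi.single lam 1) f p := rfl

lemma hderiv_smooth {n : ℕ} {N : Fin n → Fin n → Phase n → ℝ}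
    (hN : ∀ μ ν, ContDiff ℝ (⊤ : ℕ∞) (N μ ν)) {f : Phase n → ℝ} (hf : ContDiff ℝ (⊤ : ℕ∞) f)
    (ρ : Fin n) : ContDiff ℝ (⊤ : ℕ∞) (hderiv N ρ f) := by
  rw [hderiv_eq_Dd]
  exact (Dd_smooth hf _).add
    (ContDiff.sum fun lam _ => (hN lam ρ).mul (Dd_smooth hf _))

lemma Dd_hderiv {n : ℕ} {N : Fin n → Fin n → Phase n → ℝ}
    (hN : ∀ μ ν, ContDiff ℝ (⊤ : ℕ∞) (N μ ν)) {f : Phase n → ℝ} (hf : ContDiff ℝ (⊤ : ℕ∞) f)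
    (v : Phase n) (ρ : Fin n) (p : Phase n) :
    Dd v (hderiv N ρ f) p
      = hderiv N ρ (Dd v f) p + ∑ lam, Dd v (N lam ρ) p * pdk lam f p := by
  have hdf : ∀ w : Phase n, ContDiff ℝ (⊤ : ℕ∞) (Dd w f) := fun w => Dd_smooth hf w
  rw [hderiv_eq_Dd]
  rw [Dd_add ((hdf _).differentiable (by simp) p)
      ((ContDiff.sum fun lam _ =>
        (hN lam ρ).mul (hdf _)).differentiable (by simp) p)]
  rw [Dd_sum (fun lam _ =>
      ((hN lam ρ).mul (hdf _)).differentiable (by simp) p)]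
  have hterm : ∀ lam : Fin n,
      Dd v (fun q => N lam ρ q * Dd (0, Pi.single lam 1) f q) p
        = Dd v (N lam ρ) p * Dd (0, Pi.single lam 1) f p
          + N lam ρ p * Dd (0, Pi.single lam 1) (Dd v f) p := by
    intro lam
    rw [Dd_mul ((hN lam ρ).differentiable (by simp) p)
        ((hdf _).differentiable (by simp) p)]
    rw [Dd_comm hf v (0, Pi.single lam 1) p]
  simp only [hterm]
  rw [Finset.sum_add_distrib, hderiv_eq_Dd]
  rw [Dd_comm hf v (Pi.single ρ 1, 0) p]
  simp only [pdk_eq_Dd]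
  ring

/-- The momentum derivative of the d-curvature tensor is the horizontal curvature
tensor: `∂̄^σ R_{μνρ} = R^σ_{μνρ}`. -/
theorem pdk_dcurv_eq_hcurv {n : ℕ} (hn : 0 < n)
    (N : Fin n → Fin n → Phase n → ℝ)
    (hNsmooth : ∀ μ ν, ContDiff ℝ (⊤ : ℕ∞) (N μ ν))
    (hNsym : ∀ μ ν, N μ ν = N ν μ) :
    ∀ σ μ ν ρ (p : Phase n), pdk σ (dcurv N μ ν ρ) p = hcurv N σ μ ν ρ p := by
  intro σ μ ν ρ p
  have h1 := hderiv_smooth hNsmooth (hNsmooth ν μ) ρ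
  have h2 := hderiv_smooth hNsmooth (hNsmooth ρ μ) ν
  rw [pdk_eq_Dd]
  rw [show dcurv N μ ν ρ
      = (fun q => hderiv N ρ (N ν μ) q - hderiv N ν (N ρ μ) q) from rfl]
  rw [Dd_sub (h1.differentiable (by simp) p) (h2.differentiable (by simp) p)]
  rw [Dd_hderiv hNsmooth (hNsmooth ν μ) _ ρ p,
      Dd_hderiv hNsmooth (hNsmooth ρ μ) _ ν p]
  rw [hNsym ν μ, hNsym ρ μ]
  simp only [hcurv, pdk_eq_Dd]
  have hc1 : ∑ lam, Dd (0, Pi.single σ 1) (N lam ρ) p * Dd (0, Pi.single lam 1) (N μ ν) p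
      = ∑ lam, Dd (0, Pi.single lam 1) (N μ ν) p * Dd (0, Pi.single σ 1) (N lam ρ) p :=
    Finset.sum_congr rfl fun _ _ => mul_comm _ _
  have hc2 : ∑ lam, Dd (0, Pi.single σ 1) (N lam ν) p * Dd (0, Pi.single lam 1) (N μ ρ) p
      = ∑ lam, Dd (0, Pi.single lam 1) (N μ ρ) p * Dd (0, Pi.single σ 1) (N lam ν) p :=
    Finset.sum_congr rfl fun _ _ => mul_comm _ _
  rw [hc1, hc2]
  ring
end

section
/- Let N be a smooth nonlinear connection of Cartan type, i.e. N_{μν} = k_ρ H^ρ_{μν} with H^ρ_{μν} := ∂̄^ρ N_{μν}. Then the d-curvature tensor is the momentum contraction of the horizontal curvature tensor: R_{μνσ} = k_ρ R^ρ_{μνσ} for all indices μ, ν, σ. -/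
open scoped BigOperators

lemma pdk_contDiff {n : ℕ} {f : Phase n → ℝ} (hf : ContDiff ℝ (⊤ : ℕ∞) f) (ρ : Fin n) :
    ContDiff ℝ (⊤ : ℕ∞) (pdk ρ f) :=
  ((hf.fderiv_right (m := (⊤ : ℕ∞)) (by simp)).clm_apply contDiff_const)

lemma fderiv_cartan {n : ℕ} {f : Phase n → ℝ} (hf : ContDiff ℝ (⊤ : ℕ∞) f)
    (hc : ∀ p : Phase n, f p = ∑ ρ, p.2 ρ * pdk ρ f p) (p v : Phase n) :
    fderiv ℝ f p v = ∑ ρ, (v.2 ρ * pdk ρ f p + p.2 ρ * fderiv ℝ (pdk ρ f) p v) := by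
  classical
  set L : Fin n → Phase n →L[ℝ] ℝ := fun ρ =>
    (ContinuousLinearMap.proj ρ).comp (ContinuousLinearMap.snd ℝ (Fin n → ℝ) (Fin n → ℝ))
  have hterm : ∀ ρ : Fin n, HasFDerivAt (fun q : Phase n => q.2 ρ * pdk ρ f q)
      (p.2 ρ • fderiv ℝ (pdk ρ f) p + pdk ρ f p • L ρ) p := by
    intro ρ
    exact ((L ρ).hasFDerivAt).mul
      (((pdk_contDiff hf ρ).differentiable (by simp) p).hasFDerivAt)
  have hsum : HasFDerivAt f
      (∑ ρ, (p.2 ρ • fderiv ℝ (pdk ρ f) p + pdk ρ f p • L ρ)) p := by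
    have : HasFDerivAt (fun q : Phase n => ∑ ρ, q.2 ρ * pdk ρ f q)
        (∑ ρ, (p.2 ρ • fderiv ℝ (pdk ρ f) p + pdk ρ f p • L ρ)) p :=
      HasFDerivAt.fun_sum (fun ρ _ => hterm ρ)
    exact this.congr_of_eventuallyEq (Filter.Eventually.of_forall hc)
  rw [hsum.fderiv]
  simp only [ContinuousLinearMap.sum_apply, ContinuousLinearMap.add_apply,
    ContinuousLinearMap.smul_apply, ContinuousLinearMap.coe_comp', Function.comp_apply,
    ContinuousLinearMap.coe_snd', ContinuousLinearMap.proj_apply, smul_eq_mul, L]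
  exact Finset.sum_congr rfl fun ρ _ => by ring

lemma cartan_pdx {n : ℕ} {f : Phase n → ℝ} (hf : ContDiff ℝ (⊤ : ℕ∞) f)
    (hc : ∀ p : Phase n, f p = ∑ ρ, p.2 ρ * pdk ρ f p) (σ : Fin n) (p : Phase n) :
    pdx σ f p = ∑ ρ, p.2 ρ * pdx σ (pdk ρ f) p := by
  have h := fderiv_cartan hf hc p (Pi.single σ 1, 0)
  simpa [pdx] using h

lemma cartan_pdk_zero {n : ℕ} {f : Phase n → ℝ} (hf : ContDiff ℝ (⊤ : ℕ∞) f)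
    (hc : ∀ p : Phase n, f p = ∑ ρ, p.2 ρ * pdk ρ f p) (lam : Fin n) (p : Phase n) :
    ∑ ρ, p.2 ρ * pdk lam (pdk ρ f) p = 0 := by
  classical
  have h := fderiv_cartan hf hc p (0, Pi.single lam 1)
  have h2 : ∑ ρ, (Pi.single lam 1 : Fin n → ℝ) ρ * pdk ρ f p = pdk lam f p := by
    rw [Finset.sum_eq_single lam]
    · simp
    · intro b _ hb; simp [Pi.single_apply, hb]
    · simp
  rw [Finset.sum_add_distrib] at h
  have : fderiv ℝ f p (0, Pi.single lam 1) = pdk lam f p := rfl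
  rw [this, h2] at h
  have h3 : ∑ ρ, p.2 ρ * fderiv ℝ (pdk ρ f) p (0, Pi.single lam 1) = 0 := by linarith
  simpa [pdk] using h3

lemma master {n : ℕ} (N : Fin n → Fin n → Phase n → ℝ)
    (hNsmooth : ∀ μ ν, ContDiff ℝ (⊤ : ℕ∞) (N μ ν))
    (hcartan : ∀ μ ν (p : Phase n), N μ ν p = ∑ ρ, p.2 ρ * pdk ρ (N μ ν) p)
    (μ a b : Fin n) (p : Phase n) :
    hderiv N b (N μ a) p = ∑ ρ, p.2 ρ * (hderiv N b (pdk ρ (N μ a)) p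
      + ∑ lam, pdk lam (N μ a) p * pdk ρ (N lam b) p) := by
  classical
  have hf := hNsmooth μ a
  have hc := hcartan μ a
  have h1 := cartan_pdx hf hc b p
  have h2 : ∑ ρ, ∑ lam, p.2 ρ * (N lam b p * pdk lam (pdk ρ (N μ a)) p) = 0 := by
    rw [Finset.sum_comm]
    refine Finset.sum_eq_zero fun lam _ => ?_
    calc ∑ ρ, p.2 ρ * (N lam b p * pdk lam (pdk ρ (N μ a)) p)
        = N lam b p * ∑ ρ, p.2 ρ * pdk lam (pdk ρ (N μ a)) p := by
          rw [Finset.mul_sum]; exact Finset.sum_congr rfl fun ρ _ => by ring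
      _ = 0 := by rw [cartan_pdk_zero hf hc lam p, mul_zero]
  have h3 : ∑ ρ, ∑ lam, p.2 ρ * (pdk lam (N μ a) p * pdk ρ (N lam b) p)
      = ∑ lam, N lam b p * pdk lam (N μ a) p := by
    rw [Finset.sum_comm]
    refine Finset.sum_congr rfl fun lam _ => ?_
    calc ∑ ρ, p.2 ρ * (pdk lam (N μ a) p * pdk ρ (N lam b) p)
        = pdk lam (N μ a) p * ∑ ρ, p.2 ρ * pdk ρ (N lam b) p := by
          rw [Finset.mul_sum]; exact Finset.sum_congr rfl fun ρ _ => by ring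
      _ = N lam b p * pdk lam (N μ a) p := by rw [← hcartan lam b p]; ring
  simp only [hderiv, mul_add, Finset.sum_add_distrib, Finset.mul_sum]
  rw [← h1, h2, h3]
  ring

/-- For a Cartan-type nonlinear connection, the d-curvature tensor is the momentum
contraction of the horizontal curvature tensor: `R_{μνσ} = k_ρ R^ρ_{μνσ}`. -/
theorem dcurv_eq_contract_hcurv {n : ℕ} (hn : 0 < n)
    (N : Fin n → Fin n → Phase n → ℝ)
    (hNsmooth : ∀ μ ν, ContDiff ℝ (⊤ : ℕ∞) (N μ ν))
    (hNsym : ∀ μ ν, N μ ν = N ν μ)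
    (hcartan : ∀ μ ν (p : Phase n), N μ ν p = ∑ ρ, p.2 ρ * pdk ρ (N μ ν) p) :
    ∀ μ ν σ (p : Phase n), dcurv N μ ν σ p = ∑ ρ, p.2 ρ * hcurv N ρ μ ν σ p := by
  intro μ ν σ p
  have M1 := master N hNsmooth hcartan μ ν σ p
  have M2 := master N hNsmooth hcartan μ σ ν p
  rw [dcurv, hNsym ν μ, hNsym σ μ, M1, M2, ← Finset.sum_sub_distrib]
  exact Finset.sum_congr rfl fun ρ _ => by rw [hcurv]; ring
end

section
/- Let N be a smooth nonlinear connection of Cartan type, i.e. N_{μν} = k_ρ H^ρ_{μν} with H^ρ_{μν} := ∂̄^ρ N_{μν}. Then the horizontal curvature tensor is homogeneous of degree 0 in momentum and the d-curvature tensor is homogeneous of degree 1 in momentum; explicitly, k_ρ ∂̄^ρ R^λ_{μνσ} = 0 and k_ρ ∂̄^ρ R_{μνσ} = R_{μνσ} for all indices λ, μ, ν, σ. -/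
open scoped BigOperators

variable {n : ℕ}


lemma smooth_pdk {f : Phase n → ℝ} (hf : ContDiff ℝ (⊤ : ℕ∞) f) (μ : Fin n) :
    ContDiff ℝ (⊤ : ℕ∞) (pdk μ f) :=
  (hf.fderiv_right (by simp)).clm_apply contDiff_const

lemma fderiv_pdk {f : Phase n → ℝ} (hf : ContDiff ℝ (⊤ : ℕ∞) f) (ρ : Fin n) (p v : Phase n) :
    fderiv ℝ (pdk ρ f) p v = fderiv ℝ (fderiv ℝ f) p v (0, Pi.single ρ 1) := by
  have hc : DifferentiableAt ℝ (fderiv ℝ f) p :=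
    ((hf.fderiv_right (m := 1) (by exact WithTop.coe_le_coe.mpr le_top)).differentiable one_ne_zero).differentiableAt
  have := fderiv_clm_apply hc (differentiableAt_const ((0, Pi.single ρ 1) : Phase n))
  unfold pdk
  rw [this]
  simp

lemma sndeval_hasFDerivAt (ρ : Fin n) (p : Phase n) :
    HasFDerivAt (fun q : Phase n => q.2 ρ)
      (((ContinuousLinearMap.proj ρ : (Fin n → ℝ) →L[ℝ] ℝ)).comp
        (ContinuousLinearMap.snd ℝ (Fin n → ℝ) (Fin n → ℝ))) p :=
  (((ContinuousLinearMap.proj ρ : (Fin n → ℝ) →L[ℝ] ℝ)).comp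
        (ContinuousLinearMap.snd ℝ (Fin n → ℝ) (Fin n → ℝ))).hasFDerivAt

lemma euler_fderiv {f : Phase n → ℝ} {d : ℝ} (hf : ContDiff ℝ (⊤ : ℕ∞) f)
    (hE : ∀ p, ∑ ρ, p.2 ρ * pdk ρ f p = d * f p) (p v : Phase n) :
    ∑ ρ, v.2 ρ * pdk ρ f p
      + ∑ ρ, p.2 ρ * fderiv ℝ (fderiv ℝ f) p v (0, Pi.single ρ 1)
      = d * fderiv ℝ f p v := by
  have hG : HasFDerivAt (fun q : Phase n => ∑ ρ, q.2 ρ * pdk ρ f q)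
      (∑ ρ : Fin n, ((fun q : Phase n => q.2 ρ) p • fderiv ℝ (pdk ρ f) p
        + (pdk ρ f p) • (((ContinuousLinearMap.proj ρ : (Fin n → ℝ) →L[ℝ] ℝ)).comp
          (ContinuousLinearMap.snd ℝ (Fin n → ℝ) (Fin n → ℝ))))) p := by
    apply HasFDerivAt.fun_sum
    intro ρ _
    exact (sndeval_hasFDerivAt ρ p).mul
      (((smooth_pdk hf ρ).differentiable (by simp)).differentiableAt.hasFDerivAt)
  have heq : (fun q : Phase n => ∑ ρ, q.2 ρ * pdk ρ f q) = fun q => d * f q :=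
    funext hE
  rw [heq] at hG
  have hG' : HasFDerivAt (fun q : Phase n => d * f q) (d • fderiv ℝ f p) p :=
    ((hf.differentiable (by simp)).differentiableAt.hasFDerivAt).const_mul d
  have := (hG.unique hG')
  have happ := DFunLike.congr_fun this v
  simp only [ContinuousLinearMap.sum_apply, ContinuousLinearMap.add_apply,
    ContinuousLinearMap.smul_apply, ContinuousLinearMap.comp_apply,
    ContinuousLinearMap.proj_apply, ContinuousLinearMap.coe_snd',
    smul_eq_mul] at happ
  rw [Finset.sum_add_distrib] at happ
  calc ∑ ρ, v.2 ρ * pdk ρ f p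
      + ∑ ρ, p.2 ρ * fderiv ℝ (fderiv ℝ f) p v (0, Pi.single ρ 1)
      = ∑ ρ, p.2 ρ * fderiv ℝ (pdk ρ f) p v + ∑ ρ, pdk ρ f p * v.2 ρ := by
        rw [add_comm]
        congr 1
        · exact Finset.sum_congr rfl fun ρ _ => by rw [fderiv_pdk hf]
        · exact Finset.sum_congr rfl fun ρ _ => mul_comm _ _
    _ = d * fderiv ℝ f p v := happ

def Good (d : ℝ) (f : Phase n → ℝ) : Prop :=
  ContDiff ℝ (⊤ : ℕ∞) f ∧ ∀ p, ∑ ρ, p.2 ρ * pdk ρ f p = d * f p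

lemma symm2 {f : Phase n → ℝ} (hf : ContDiff ℝ (⊤ : ℕ∞) f) (p v w : Phase n) :
    fderiv ℝ (fderiv ℝ f) p v w = fderiv ℝ (fderiv ℝ f) p w v :=
  (hf.contDiffAt.isSymmSndFDerivAt (by rw [minSmoothness_of_isRCLikeNormedField]; exact WithTop.coe_le_coe.mpr (le_top : (2 : ℕ∞) ≤ ⊤))) v w

lemma good_pdk {f : Phase n → ℝ} {d e : ℝ} (hf : Good d f) (he : e = d - 1) (μ : Fin n) :
    Good e (pdk μ f) := by
  refine ⟨smooth_pdk hf.1 μ, fun p => ?_⟩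
  have h := euler_fderiv hf.1 hf.2 p (0, Pi.single μ 1)
  have h1 : ∑ ρ, ((0, Pi.single μ 1) : Phase n).2 ρ * pdk ρ f p = pdk μ f p := by
    simp [Pi.single_apply, Finset.sum_ite_eq', mul_comm]
  have h2 : ∀ ρ : Fin n, pdk ρ (pdk μ f) p
      = fderiv ℝ (fderiv ℝ f) p (0, Pi.single μ 1) (0, Pi.single ρ 1) := by
    intro ρ
    rw [show pdk ρ (pdk μ f) p = fderiv ℝ (pdk μ f) p (0, Pi.single ρ 1) from rfl,
      fderiv_pdk hf.1, symm2 hf.1]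
  calc ∑ ρ, p.2 ρ * pdk ρ (pdk μ f) p
      = ∑ ρ, p.2 ρ * fderiv ℝ (fderiv ℝ f) p (0, Pi.single μ 1) (0, Pi.single ρ 1) :=
        Finset.sum_congr rfl fun ρ _ => by rw [h2 ρ]
    _ = d * pdk μ f p - pdk μ f p := by
        have hμ : fderiv ℝ f p (0, Pi.single μ 1) = pdk μ f p := rfl
        rw [h1, hμ] at h
        linarith
    _ = e * pdk μ f p := by rw [he]; ring

lemma good_pdx {f : Phase n → ℝ} {d : ℝ} (hf : Good d f) (μ : Fin n) :
    Good d (pdx μ f) := by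
  refine ⟨(hf.1.fderiv_right (by simp)).clm_apply contDiff_const, fun p => ?_⟩
  have h := euler_fderiv hf.1 hf.2 p (Pi.single μ 1, 0)
  have h1 : ∑ ρ, ((Pi.single μ 1, 0) : Phase n).2 ρ * pdk ρ f p = 0 := by simp
  have h2 : ∀ ρ : Fin n, pdk ρ (pdx μ f) p
      = fderiv ℝ (fderiv ℝ f) p (Pi.single μ 1, 0) (0, Pi.single ρ 1) := by
    intro ρ
    have : pdx μ f = fun q => fderiv ℝ f q (Pi.single μ 1, 0) := rfl
    rw [show pdk ρ (pdx μ f) p = fderiv ℝ (pdx μ f) p (0, Pi.single ρ 1) from rfl]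
    have hc : DifferentiableAt ℝ (fderiv ℝ f) p :=
      ((hf.1.fderiv_right (m := 1) (by exact WithTop.coe_le_coe.mpr le_top)).differentiable one_ne_zero).differentiableAt
    rw [this, fderiv_clm_apply hc (differentiableAt_const _)]
    simp [symm2 hf.1 p]
  calc ∑ ρ, p.2 ρ * pdk ρ (pdx μ f) p
      = ∑ ρ, p.2 ρ * fderiv ℝ (fderiv ℝ f) p (Pi.single μ 1, 0) (0, Pi.single ρ 1) :=
        Finset.sum_congr rfl fun ρ _ => by rw [h2 ρ]
    _ = d * pdx μ f p := by rw [h1, zero_add] at h; exact h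

lemma pdk_add {f g : Phase n → ℝ} (hf : DifferentiableAt ℝ f p) (hg : DifferentiableAt ℝ g p)
    (ρ : Fin n) : pdk ρ (fun q => f q + g q) p = pdk ρ f p + pdk ρ g p := by
  unfold pdk; rw [fderiv_fun_add hf hg]; simp

lemma pdk_sub {f g : Phase n → ℝ} (hf : DifferentiableAt ℝ f p) (hg : DifferentiableAt ℝ g p)
    (ρ : Fin n) : pdk ρ (fun q => f q - g q) p = pdk ρ f p - pdk ρ g p := by
  unfold pdk; rw [fderiv_fun_sub hf hg]; simp

lemma pdk_mul {f g : Phase n → ℝ} (hf : DifferentiableAt ℝ f p) (hg : DifferentiableAt ℝ g p)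
    (ρ : Fin n) : pdk ρ (fun q => f q * g q) p = pdk ρ f p * g p + f p * pdk ρ g p := by
  unfold pdk; rw [fderiv_fun_mul hf hg]; simp; ring

lemma pdk_sum {ι : Type*} [Fintype ι] {F : ι → Phase n → ℝ}
    (hF : ∀ i, DifferentiableAt ℝ (F i) p) (ρ : Fin n) :
    pdk ρ (fun q => ∑ i, F i q) p = ∑ i, pdk ρ (F i) p := by
  unfold pdk
  rw [fderiv_fun_sum fun i _ => hF i]
  simp

lemma good_add {f g : Phase n → ℝ} {d : ℝ} (hf : Good d f) (hg : Good d g) :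
    Good d (fun p => f p + g p) := by
  refine ⟨hf.1.add hg.1, fun p => ?_⟩
  simp only [pdk_add ((hf.1.differentiable (by simp)).differentiableAt)
    ((hg.1.differentiable (by simp)).differentiableAt), mul_add]
  rw [Finset.sum_add_distrib, hf.2, hg.2]

lemma good_sub {f g : Phase n → ℝ} {d : ℝ} (hf : Good d f) (hg : Good d g) :
    Good d (fun p => f p - g p) := by
  refine ⟨hf.1.sub hg.1, fun p => ?_⟩
  simp only [pdk_sub ((hf.1.differentiable (by simp)).differentiableAt)
    ((hg.1.differentiable (by simp)).differentiableAt), mul_sub]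
  rw [Finset.sum_sub_distrib, hf.2, hg.2]

lemma good_mul {f g : Phase n → ℝ} {d e c : ℝ} (hf : Good d f) (hg : Good e g)
    (hc : c = d + e) : Good c (fun p => f p * g p) := by
  refine ⟨hf.1.mul hg.1, fun p => ?_⟩
  simp only [pdk_mul ((hf.1.differentiable (by simp)).differentiableAt)
    ((hg.1.differentiable (by simp)).differentiableAt), mul_add]
  rw [Finset.sum_add_distrib]
  have h1 : ∑ ρ, p.2 ρ * (pdk ρ f p * g p) = (∑ ρ, p.2 ρ * pdk ρ f p) * g p := by
    rw [Finset.sum_mul]; exact Finset.sum_congr rfl fun ρ _ => by ring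
  have h2 : ∑ ρ, p.2 ρ * (f p * pdk ρ g p) = f p * ∑ ρ, p.2 ρ * pdk ρ g p := by
    rw [Finset.mul_sum]; exact Finset.sum_congr rfl fun ρ _ => by ring
  rw [h1, h2, hf.2, hg.2, hc]
  ring

lemma good_sum {ι : Type*} [Fintype ι] {F : ι → Phase n → ℝ} {d : ℝ}
    (hF : ∀ i, Good d (F i)) : Good d (fun p => ∑ i, F i p) := by
  refine ⟨ContDiff.sum fun i _ => (hF i).1, fun p => ?_⟩
  simp only [pdk_sum fun i => (((hF i).1.differentiable (by simp)).differentiableAt),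
    Finset.mul_sum]
  rw [Finset.sum_comm]
  exact Finset.sum_congr rfl fun i _ => (hF i).2 p

lemma good_hderiv {N : Fin n → Fin n → Phase n → ℝ}
    (hN : ∀ μ ν, Good 1 (N μ ν)) {f : Phase n → ℝ} {d : ℝ} (hf : Good d f) (μ : Fin n) :
    Good d (hderiv N μ f) := by
  have : Good d (fun p => pdx μ f p + ∑ ν, N ν μ p * pdk ν f p) :=
    good_add (good_pdx hf μ)
      (good_sum fun ν => good_mul (hN ν μ) (good_pdk hf rfl ν) (by ring))
  exact this

/-- For a Cartan-type nonlinear connection, the horizontal curvature tensor is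
0-homogeneous and the d-curvature tensor is 1-homogeneous in momentum. -/
theorem curvature_homogeneity {n : ℕ} (hn : 0 < n)
    (N : Fin n → Fin n → Phase n → ℝ)
    (hNsmooth : ∀ μ ν, ContDiff ℝ (⊤ : ℕ∞) (N μ ν))
    (hNsym : ∀ μ ν, N μ ν = N ν μ)
    (hcartan : ∀ μ ν (p : Phase n), N μ ν p = ∑ ρ, p.2 ρ * pdk ρ (N μ ν) p) :
    (∀ lam μ ν σ (p : Phase n),
      ∑ ρ, p.2 ρ * pdk ρ (hcurv N lam μ ν σ) p = 0) ∧
    (∀ μ ν σ (p : Phase n),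
      ∑ ρ, p.2 ρ * pdk ρ (dcurv N μ ν σ) p = dcurv N μ ν σ p) := by
  have hGoodN : ∀ μ ν, Good 1 (N μ ν) := fun μ ν =>
    ⟨hNsmooth μ ν, fun p => by rw [← hcartan μ ν p, one_mul]⟩
  constructor
  · intro lam μ ν σ p
    have h0 : (0:ℝ) = 1 - 1 := by norm_num
    have hA : Good 0 (hcurv N lam μ ν σ) := by
      have : Good 0 (fun p =>
          hderiv N σ (pdk lam (N μ ν)) p - hderiv N ν (pdk lam (N μ σ)) p
            + ∑ l, pdk l (N μ ν) p * pdk lam (N l σ) p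
            - ∑ l, pdk l (N μ σ) p * pdk lam (N l ν) p) := by
        refine good_sub (good_add (good_sub ?_ ?_) ?_) ?_
        · exact good_hderiv hGoodN (good_pdk (hGoodN μ ν) h0 lam) σ
        · exact good_hderiv hGoodN (good_pdk (hGoodN μ σ) h0 lam) ν
        · exact good_sum fun l => good_mul (good_pdk (hGoodN μ ν) h0 l)
            (good_pdk (hGoodN l σ) h0 lam) (by norm_num)
        · exact good_sum fun l => good_mul (good_pdk (hGoodN μ σ) h0 l)
            (good_pdk (hGoodN l ν) h0 lam) (by norm_num)
      exact this
    rw [hA.2 p, zero_mul]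
  · intro μ ν σ p
    have hA : Good 1 (dcurv N μ ν σ) := by
      have : Good 1 (fun p => hderiv N σ (N ν μ) p - hderiv N ν (N σ μ) p) :=
        good_sub (good_hderiv hGoodN (hGoodN ν μ) σ) (good_hderiv hGoodN (hGoodN σ μ) ν)
      exact this
    rw [hA.2 p, one_mul]
end
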